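/- arXiv:2504.07456 — 4 statements merged into one kernel-verified Lean document; each statement's English description precedes it below -/
import Mathlib

section
/- For every n ≥ 1, the set W_{n+1} of new fractions inserted at step n+1 of the Stern-Brocot construction satisfies W_{n+1} = { q/(2q−p), (q−p)/(2q−p) : p/q ∈ W_n }. -/
/-!
The map `f x = x / (1 + x)` commutes with mediants of nonnegative fractions, since it sends `p/q`
to `p/(p+q)` in lowest terms, and `x ↦ 1 - x` reverses mediants. By induction, the left half of
`F_{n+1}` is therefore `f(F_n)` and `F_n` is symmetric about `1/2`. Hence
`W_{n+1} = f(W_n) ∪ (1 - f(W_n))`, and since `W_n = 1 - W_n` for `n ≥ 1` this is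
`f(1 - W_n) ∪ (1 - f(1 - W_n))`, where `f(1 - p/q) = (q-p)/(2q-p)` and `1 - f(1 - p/q) = q/(2q-p)`.
-/

/-- The mediant of two rationals, formed from numerators and denominators
of the reduced fractions. -/
def mediant (a b : ℚ) : ℚ := ((a.num + b.num : ℤ) : ℚ) / ((a.den + b.den : ℕ) : ℚ)

/-- `sb n j` is the `j`-th element `ξ_{j,n}` of the Stern–Brocot sequence `F_n`:
`F_0 = {0/1, 1/1}` and `F_{n+1}` is obtained from `F_n` by inserting the mediant
between every pair of consecutive elements. -/
def sb : ℕ → ℕ → ℚ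
  | 0, j => if j = 0 then 0 else 1
  | n + 1, j => if j % 2 = 0 then sb n (j / 2) else mediant (sb n (j / 2)) (sb n (j / 2 + 1))

/-- `sbNew n` is the set `W_n` of new fractions inserted at step `n` of the
Stern–Brocot construction (the elements of odd index in `F_n`). -/
def sbNew (n : ℕ) : Finset ℚ :=
  ((Finset.range (2 ^ n)).filter (fun j => j % 2 = 1)).image (sb n)

namespace Rat

theorem num_den_eq_of_eq_div_of_isCoprime {q : ℚ} {a b : ℤ} (hb : 0 < b) (hab : IsCoprime a b)
    (h : q = a / b) : q.num = a ∧ (q.den : ℤ) = b := by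
  have hab' : a.natAbs.Coprime b.natAbs := Int.isCoprime_iff_gcd_eq_one.mp hab
  subst h
  exact ⟨num_div_eq_of_coprime hb hab', den_div_eq_of_coprime hb hab'⟩

theorem one_sub_den (q : ℚ) : (1 - q).den = q.den := by simp

theorem one_sub_num (q : ℚ) : (1 - q).num = q.den - q.num := by
  have := mul_den_eq_num (1 - q)
  rw [one_sub_den, sub_mul, one_mul, mul_den_eq_num] at this
  exact_mod_cast this.symm

theorem div_one_add_num_den {q : ℚ} (hq : 0 ≤ q) :
    (q / (1 + q)).num = q.num ∧ ((q / (1 + q)).den : ℤ) = q.num + q.den := by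
  apply num_den_eq_of_eq_div_of_isCoprime
  · have := num_nonneg.2 hq
    have := q.den_pos
    omega
  · simpa [add_comm] using q.isCoprime_num_den.add_mul_left_right 1
  · have h1 : 1 + q ≠ 0 := by positivity
    rw [div_eq_div_iff h1 (by push_cast; rw [← mul_den_eq_num]; positivity)]
    push_cast
    rw [← mul_den_eq_num]
    ring

theorem one_sub_div_one_add_one_sub (r : ℚ) :
    (1 - r) / (1 + (1 - r)) = ((r.den : ℚ) - r.num) / (2 * r.den - r.num) := by
  rw [← mul_den_eq_num, ← mul_div_mul_right _ _ (by positivity : (r.den : ℚ) ≠ 0)]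
  ring_nf

theorem one_sub_one_sub_div_one_add_one_sub {r : ℚ} (hr : r ≠ 2) :
    1 - (1 - r) / (1 + (1 - r)) = (r.den : ℚ) / (2 * r.den - r.num) := by
  rw [← mul_den_eq_num, ← mul_div_mul_right _ _ (by positivity : (r.den : ℚ) ≠ 0)]
  have : 1 + (1 - r) ≠ 0 := fun h ↦ hr (by linarith)
  field_simp
  ring

end Rat

open Finset

theorem mediant_eq_div (a b : ℚ) : mediant a b = ((a.num : ℚ) + b.num) / ((a.den : ℚ) + b.den) := by
  simp [mediant]

theorem mediant_mem_Icc {a b : ℚ} (ha : a ∈ Set.Icc (0 : ℚ) 1) (hb : b ∈ Set.Icc (0 : ℚ) 1) :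
    mediant a b ∈ Set.Icc (0 : ℚ) 1 := by
  obtain ⟨ha₀, ha₁⟩ := ha
  obtain ⟨hb₀, hb₁⟩ := hb
  have hpa : (0 : ℚ) ≤ a.num := by exact_mod_cast Rat.num_nonneg.2 ha₀
  have hpb : (0 : ℚ) ≤ b.num := by exact_mod_cast Rat.num_nonneg.2 hb₀
  have hqa : (a.num : ℚ) ≤ a.den := by exact_mod_cast Rat.num_le_denom_iff.2 ha₁
  have hqb : (b.num : ℚ) ≤ b.den := by exact_mod_cast Rat.num_le_denom_iff.2 hb₁
  have hd : (0 : ℚ) < a.den + b.den := by positivity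
  rw [mediant_eq_div]
  exact ⟨by positivity, (div_le_one hd).2 (by linarith)⟩

theorem mediant_one_sub (a b : ℚ) : mediant (1 - b) (1 - a) = 1 - mediant a b := by
  simp only [mediant_eq_div, Rat.one_sub_num, Rat.one_sub_den]
  push_cast
  field_simp
  ring

theorem mediant_div_one_add {a b : ℚ} (ha : 0 ≤ a) (hb : 0 ≤ b) :
    mediant (a / (1 + a)) (b / (1 + b)) = mediant a b / (1 + mediant a b) := by
  obtain ⟨hna, hda⟩ := Rat.div_one_add_num_den ha
  obtain ⟨hnb, hdb⟩ := Rat.div_one_add_num_den hb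
  have hpa : (0 : ℚ) ≤ a.num := by exact_mod_cast Rat.num_nonneg.2 ha
  have hpb : (0 : ℚ) ≤ b.num := by exact_mod_cast Rat.num_nonneg.2 hb
  have hda' : ((a / (1 + a)).den : ℚ) = a.num + a.den := by exact_mod_cast hda
  have hdb' : ((b / (1 + b)).den : ℚ) = b.num + b.den := by exact_mod_cast hdb
  rw [mediant_eq_div, mediant_eq_div, hna, hnb, hda', hdb']
  field_simp
  ring

theorem sb_succ (n j : ℕ) :
    sb (n + 1) j = if j % 2 = 0 then sb n (j / 2) else mediant (sb n (j / 2)) (sb n (j / 2 + 1)) :=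
  rfl

theorem sb_mem_Icc (n j : ℕ) : sb n j ∈ Set.Icc (0 : ℚ) 1 := by
  induction n generalizing j with
  | zero => unfold sb; split_ifs <;> norm_num
  | succ n ih => unfold sb; split_ifs; exacts [ih _, mediant_mem_Icc (ih _) (ih _)]

theorem sb_succ_of_le_two_pow {n j : ℕ} (hj : j ≤ 2 ^ n) :
    sb (n + 1) j = sb n j / (1 + sb n j) := by
  induction n generalizing j with
  | zero =>
    interval_cases j <;> norm_num [sb, mediant]
  | succ n ih =>
    rw [pow_succ] at hj
    rw [sb_succ, sb_succ n j]
    split_ifs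
    · exact ih (by omega)
    · rw [ih (by omega), ih (by omega)]
      exact mediant_div_one_add (sb_mem_Icc _ _).1 (sb_mem_Icc _ _).1

theorem sb_two_pow_sub {n j : ℕ} (hj : j ≤ 2 ^ n) : sb n (2 ^ n - j) = 1 - sb n j := by
  induction n generalizing j with
  | zero =>
    interval_cases j <;> norm_num [sb]
  | succ n ih =>
    rw [pow_succ] at hj ⊢
    rw [sb_succ, sb_succ n j]
    split_ifs with h₁ h₂ h₂
    · rw [show (2 ^ n * 2 - j) / 2 = 2 ^ n - j / 2 by omega]
      exact ih (by omega)
    · omega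
    · omega
    · rw [show (2 ^ n * 2 - j) / 2 = 2 ^ n - (j / 2 + 1) by omega,
        show 2 ^ n - (j / 2 + 1) + 1 = 2 ^ n - j / 2 by omega, ih (by omega), ih (by omega)]
      exact mediant_one_sub _ _

theorem sb_succ_of_two_pow_le {n j : ℕ} (hj₁ : 2 ^ n ≤ j) (hj₂ : j ≤ 2 ^ (n + 1)) :
    sb (n + 1) j = 1 - sb n (2 ^ (n + 1) - j) / (1 + sb n (2 ^ (n + 1) - j)) := by
  have hsymm := sb_two_pow_sub (n := n + 1) (Nat.sub_le _ j)
  rw [Nat.sub_sub_self hj₂] at hsymm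
  have hpow : 2 ^ (n + 1) = 2 * 2 ^ n := pow_succ' 2 n
  rw [hsymm, sb_succ_of_le_two_pow (by omega)]

theorem mem_sbNew {n : ℕ} {r : ℚ} : r ∈ sbNew n ↔ ∃ j < 2 ^ n, j % 2 = 1 ∧ sb n j = r := by
  simp [sbNew, and_assoc]

theorem sbNew_image_one_sub {n : ℕ} (hn : 1 ≤ n) : (sbNew n).image (1 - ·) = sbNew n := by
  have heven : 2 ^ n % 2 = 0 := Nat.two_pow_mod_two_eq_zero.2 hn
  have hsub : ∀ r ∈ sbNew n, 1 - r ∈ sbNew n := by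
    simp only [mem_sbNew]
    rintro _ ⟨j, hj, hodd, rfl⟩
    exact ⟨2 ^ n - j, by omega, by omega, sb_two_pow_sub hj.le⟩
  ext r
  simp only [mem_image]
  constructor
  · rintro ⟨s, hs, rfl⟩
    exact hsub s hs
  · exact fun hr ↦ ⟨1 - r, hsub r hr, sub_sub_cancel 1 r⟩

theorem sbNew_succ_eq_image_union {n : ℕ} (hn : 1 ≤ n) :
    sbNew (n + 1) = (sbNew n).image (fun r ↦ r / (1 + r)) ∪
      (sbNew n).image (fun r ↦ 1 - r / (1 + r)) := by
  have heven : 2 ^ n % 2 = 0 := Nat.two_pow_mod_two_eq_zero.2 hn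
  have hpow : 2 ^ (n + 1) = 2 * 2 ^ n := pow_succ' 2 n
  ext x
  simp only [mem_union, mem_image, mem_sbNew]
  constructor
  · rintro ⟨j, hj, hodd, rfl⟩
    rcases lt_or_gt_of_ne (show j ≠ 2 ^ n by omega) with hlt | hgt
    · exact .inl ⟨sb n j, ⟨j, hlt, hodd, rfl⟩, (sb_succ_of_le_two_pow hlt.le).symm⟩
    · refine .inr ⟨sb n (2 ^ (n + 1) - j), ⟨2 ^ (n + 1) - j, by omega, by omega, rfl⟩, ?_⟩
      exact (sb_succ_of_two_pow_le hgt.le hj.le).symm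
  · rintro (⟨_, ⟨i, hi, hodd, rfl⟩, rfl⟩ | ⟨_, ⟨i, hi, hodd, rfl⟩, rfl⟩)
    · exact ⟨i, by omega, hodd, sb_succ_of_le_two_pow hi.le⟩
    · refine ⟨2 ^ (n + 1) - i, by omega, by omega, ?_⟩
      rw [sb_succ_of_two_pow_le (by omega) (by omega), Nat.sub_sub_self (by omega)]

/-- For every `n ≥ 1`,
`W_{n+1} = { q/(2q−p), (q−p)/(2q−p) : p/q ∈ W_n }` (fractions in lowest terms,
`p = ` numerator, `q = ` denominator). -/
theorem sbNew_succ (n : ℕ) (hn : 1 ≤ n) :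
    sbNew (n + 1) =
      (sbNew n).image (fun r => (r.den : ℚ) / (2 * (r.den : ℚ) - (r.num : ℚ))) ∪
      (sbNew n).image (fun r => ((r.den : ℚ) - (r.num : ℚ)) / (2 * (r.den : ℚ) - (r.num : ℚ))) := by
  rw [sbNew_succ_eq_image_union hn, union_comm]
  conv_lhs => rw [← sbNew_image_one_sub hn, image_image, image_image]
  congr 1
  · refine image_congr fun r hr ↦ Rat.one_sub_one_sub_div_one_add_one_sub ?_
    obtain ⟨j, -, -, rfl⟩ := mem_sbNew.1 hr
    exact ((sb_mem_Icc n j).2.trans_lt one_lt_two).ne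
  · exact image_congr fun r _ ↦ Rat.one_sub_div_one_add_one_sub r
end

section
/- For every n ≥ 1, the sum S_n = Σ_{p/q ∈ W_n} 1/q² over the new fractions W_n (in lowest terms) of the Stern-Brocot construction satisfies S_n ≤ 1. -/
/-! Every fraction of `W_{n+1}` is the mediant of Farey neighbours `p/q < p'/q'` of `F_n`,
so its denominator is `q + q'` and `1/(q + q')² ≤ 1/(q q') = p'/q' - p/q`. Summing over
consecutive pairs of `F_n`, the right-hand sides telescope to `1 - 0`. -/

theorem mediant_num_den_of_det {a b : ℚ} (h : b.num * a.den - a.num * b.den = 1) :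
    (mediant a b).num = a.num + b.num ∧ (mediant a b).den = a.den + b.den := by
  have hden : (0 : ℤ) < (a.den + b.den : ℕ) := by positivity
  have hcop : IsCoprime (a.num + b.num) (a.den + b.den : ℕ) :=
    ⟨-b.den, b.num, by push_cast; linear_combination h⟩
  have hcop' := Int.isCoprime_iff_gcd_eq_one.mp hcop
  refine ⟨Rat.num_div_eq_of_coprime hden hcop', Int.natCast_inj.mp ?_⟩
  simpa [mediant] using Rat.den_div_eq_of_coprime hden hcop'

theorem sub_eq_one_div_den_mul_den_of_det {a b : ℚ} (h : b.num * a.den - a.num * b.den = 1) :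
    b - a = 1 / (a.den * b.den) := by
  have h' : (b.num * a.den - a.num * b.den : ℚ) = 1 := by exact_mod_cast h
  rw [eq_div_iff (by positivity)]
  linear_combination (a.den : ℚ) * Rat.mul_den_eq_num b - b.den * Rat.mul_den_eq_num a + h'

theorem one_div_add_sq_le_one_div_mul {K : Type*} [Field K] [LinearOrder K] [IsStrictOrderedRing K]
    {x y : K} (hx : 0 < x) (hy : 0 < y) : 1 / (x + y) ^ 2 ≤ 1 / (x * y) :=
  one_div_le_one_div_of_le (by positivity) (by nlinarith)

theorem sb_two_mul (n k : ℕ) : sb (n + 1) (2 * k) = sb n k := by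
  simp [sb]

theorem sb_two_mul_add_one (n k : ℕ) :
    sb (n + 1) (2 * k + 1) = mediant (sb n k) (sb n (k + 1)) := by
  simp [sb, show (2 * k + 1) / 2 = k by omega]

theorem sb_zero_right (n : ℕ) : sb n 0 = 0 := by
  induction n with
  | zero => rfl
  | succ n ih => rw [← sb_two_mul] at ih; simpa using ih

theorem sb_two_pow (n : ℕ) : sb n (2 ^ n) = 1 := by
  induction n with
  | zero => rfl
  | succ n ih => rwa [pow_succ', sb_two_mul]

theorem sb_num_mul_den_sub_eq_one (n : ℕ) {j : ℕ} (hj : j < 2 ^ n) :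
    (sb n (j + 1)).num * (sb n j).den - (sb n j).num * (sb n (j + 1)).den = 1 := by
  induction n generalizing j with
  | zero =>
    obtain rfl : j = 0 := by simpa using hj
    simp [sb]
  | succ n ih =>
    obtain ⟨k, rfl | rfl⟩ := Nat.even_or_odd' j
    · have hk : k < 2 ^ n := by rw [pow_succ'] at hj; omega
      obtain ⟨hnum, hden⟩ := mediant_num_den_of_det (ih hk)
      rw [sb_two_mul, sb_two_mul_add_one, hnum, hden]
      push_cast
      linear_combination ih hk
    · have hk : k < 2 ^ n := by rw [pow_succ'] at hj; omega
      obtain ⟨hnum, hden⟩ := mediant_num_den_of_det (ih hk)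
      rw [show 2 * k + 1 + 1 = 2 * (k + 1) by ring, sb_two_mul, sb_two_mul_add_one, hnum, hden]
      push_cast
      linear_combination ih hk

theorem sum_one_div_den_mul_den_sb (n : ℕ) :
    ∑ j ∈ Finset.range (2 ^ n), (1 : ℚ) / ((sb n j).den * (sb n (j + 1)).den) = 1 := by
  rw [← Finset.sum_congr rfl fun j hj =>
      sub_eq_one_div_den_mul_den_of_det (sb_num_mul_den_sub_eq_one n (Finset.mem_range.mp hj)),
    Finset.sum_range_sub, sb_two_pow, sb_zero_right, sub_zero]

theorem sbNew_succ_s4 (n : ℕ) :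
    sbNew (n + 1) = (Finset.range (2 ^ n)).image fun k => mediant (sb n k) (sb n (k + 1)) := by
  have hodd : (Finset.range (2 ^ (n + 1))).filter (fun j => j % 2 = 1) =
      (Finset.range (2 ^ n)).image (fun k => 2 * k + 1) := by
    ext j
    simp only [Finset.mem_filter, Finset.mem_range, Finset.mem_image, pow_succ']
    constructor
    · rintro ⟨hj, hj_odd⟩
      exact ⟨j / 2, by omega, by omega⟩
    · rintro ⟨k, hk, rfl⟩
      omega
  rw [sbNew, hodd, Finset.image_image]
  exact Finset.image_congr fun k _ => sb_two_mul_add_one n k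

/-- For every `n ≥ 1`, `S_n = Σ_{p/q ∈ W_n} 1/q² ≤ 1`, where each element of
`W_n` is written in lowest terms as `p/q`. -/
theorem sum_inv_den_sq_le_one (n : ℕ) (hn : 1 ≤ n) :
    ∑ r ∈ sbNew n, (1 : ℚ) / (r.den : ℚ) ^ 2 ≤ 1 := by
  obtain ⟨m, rfl⟩ := Nat.exists_eq_add_of_le' hn
  rw [sbNew_succ_s4]
  calc _ ≤ ∑ k ∈ Finset.range (2 ^ m), 1 / ((mediant (sb m k) (sb m (k + 1))).den : ℚ) ^ 2
      := Finset.sum_image_le_of_nonneg (f := fun r : ℚ => 1 / (r.den : ℚ) ^ 2)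
          fun _ _ => by positivity
    _ ≤ ∑ k ∈ Finset.range (2 ^ m), (1 : ℚ) / ((sb m k).den * (sb m (k + 1)).den) := by
        refine Finset.sum_le_sum fun k hk => ?_
        rw [(mediant_num_den_of_det (sb_num_mul_den_sub_eq_one m (Finset.mem_range.mp hk))).2]
        push_cast
        exact one_div_add_sq_le_one_div_mul (by positivity) (by positivity)
    _ = 1 := sum_one_div_den_mul_den_sb m
end

section
/- Let T be the operator (Tf)(x) = f(1/(2−x))/(2−x)² − f(1/(1+x))/(1+x)² on C[1/2,1], let f_0 ∈ C[1/2,1] and f_n = T^n f_0. Then for every n ≥ 1 and every real y ≥ 1: f_n(y/(y+1)) = (y+1)² · ( f_0((y+n)/(y+n+1))/(y+n+1)² − Σ_{k=1}^{n} f_{n−k}((y+k)/(2y+2k−1))/(2y+2k−1)² ). -/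
/-! Evaluating `T g` at a point `y/(y+1)` with `y ≥ 0` samples `g` at `(y+1)/(y+2)`, which is again of
the form `y'/(y'+1)` with `y' = y + 1`, and at `(y+1)/(2y+1)`. Unrolling the first branch `n` times
along `y, y+1, …, y+n` leaves `f₀` at `(y+n)/(y+n+1)` and collects one term of the second kind
from each step; the weights `(y+k)²` telescope. -/

/-- Defined on all of `ℝ → ℝ`; it acts on `C[1/2,1]` since `1/(2−x)` and `1/(1+x)` lie in `[1/2,1]`
for `x ∈ [1/2,1]`. -/
noncomputable def T (f : ℝ → ℝ) : ℝ → ℝ := fun x =>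
  f (1 / (2 - x)) / (2 - x) ^ 2 - f (1 / (1 + x)) / (1 + x) ^ 2

theorem Finset.sum_Icc_one_succ {M : Type*} [AddCommMonoid M] (a : ℕ → M) (n : ℕ) :
    ∑ k ∈ Finset.Icc 1 (n + 1), a k = a 1 + ∑ k ∈ Finset.Icc 1 n, a (k + 1) := by
  induction n with
  | zero => simp
  | succ n ih =>
    rw [Finset.sum_Icc_succ_top (by omega), ih, Finset.sum_Icc_succ_top (by omega), add_assoc]

lemma T_apply_div_add_one (g : ℝ → ℝ) {y : ℝ} (hy : 0 ≤ y) :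
    T g (y / (y + 1)) =
      (y + 1) ^ 2 * (g ((y + 1) / (y + 1 + 1)) / (y + 1 + 1) ^ 2 -
        g ((y + 1) / (2 * y + 1)) / (2 * y + 1) ^ 2) := by
  have h₁ : 2 - y / (y + 1) = (y + 1 + 1) / (y + 1) := by field_simp; ring
  have h₂ : 1 + y / (y + 1) = (2 * y + 1) / (y + 1) := by field_simp; ring
  simp only [T, h₁, h₂, one_div_div]
  field_simp

theorem T_iterate_recurrence_general (f₀ : ℝ → ℝ)
    (n : ℕ) (y : ℝ) (hy : 1 ≤ y) :
    (T^[n] f₀) (y / (y + 1)) =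
      (y + 1) ^ 2 *
        (f₀ ((y + n) / (y + n + 1)) / (y + n + 1) ^ 2 -
          ∑ k ∈ Finset.Icc 1 n,
            (T^[n - k] f₀) ((y + k) / (2 * y + 2 * k - 1)) / (2 * y + 2 * k - 1) ^ 2) := by
  induction n generalizing y with
  | zero =>
    simp only [Function.iterate_zero, id_eq, CharP.cast_eq_zero, add_zero,
      Finset.Icc_eq_empty_of_lt zero_lt_one, Finset.sum_empty, sub_zero]
    field_simp
  | succ n ih =>
    have shift (k : ℕ) :
        (T^[n + 1 - (k + 1)] f₀) ((y + ↑(k + 1)) / (2 * y + 2 * ↑(k + 1) - 1)) /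
            (2 * y + 2 * ↑(k + 1) - 1) ^ 2 =
          (T^[n - k] f₀) ((y + 1 + k) / (2 * (y + 1) + 2 * k - 1)) /
            (2 * (y + 1) + 2 * k - 1) ^ 2 := by
      rw [Nat.add_sub_add_right]; push_cast; ring_nf
    rw [Function.iterate_succ_apply', T_apply_div_add_one _ (by linarith), ih (y + 1) (by linarith),
      mul_div_cancel_left₀ _ (by positivity), Finset.sum_Icc_one_succ]
    simp only [shift, Nat.add_sub_cancel, Nat.cast_one]
    push_cast
    ring_nf

/-- The recurrence for `f_n = T^n f_0`: for every `n ≥ 1` and real `y ≥ 1`,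
`f_n(y/(y+1)) = (y+1)²( f_0((y+n)/(y+n+1))/(y+n+1)²
  − Σ_{k=1}^n f_{n−k}((y+k)/(2y+2k−1))/(2y+2k−1)² )`. -/
theorem T_iterate_recurrence (f₀ : ℝ → ℝ)
    (hf : ContinuousOn f₀ (Set.Icc (1 / 2 : ℝ) 1))
    (n : ℕ) (hn : 1 ≤ n) (y : ℝ) (hy : 1 ≤ y) :
    (T^[n] f₀) (y / (y + 1)) =
      (y + 1) ^ 2 *
        (f₀ ((y + n) / (y + n + 1)) / (y + n + 1) ^ 2 -
          ∑ k ∈ Finset.Icc 1 n,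
            (T^[n - k] f₀) ((y + k) / (2 * y + 2 * k - 1)) / (2 * y + 2 * k - 1) ^ 2) :=
  T_iterate_recurrence_general f₀ n y hy
end

section
/- Let T be the operator (Tf)(x) = f(1/(2−x))/(2−x)² − f(1/(1+x))/(1+x)² on C[1/2,1]. Suppose f_0 = g_0 − h_0 where g_0, h_0 are nonnegative bounded increasing continuous functions on [1/2,1], and set M = max(sup g_0, sup h_0) and f_n = T^n f_0. Then for all n ≥ 0 and y ≥ 1: |f_n(y/(y+1))| ≤ 2M ((y+1)/(y+n+1))². -/
/-!
With `φ₁ x = 1/(2-x)`, `φ₂ x = 1/(1+x)` and `u t = g t * t²` we have `T g = u ∘ φ₁ - u ∘ φ₂`.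
On `[1/2, 1]`, `φ₁` increases, `φ₂` decreases and `φ₂ ≤ φ₁`, so `T` preserves nonnegative
increasing functions, and for those `0 ≤ T g ≤ u ∘ φ₁`. Since `φ₁ (y/(y+1)) = (y+1)/(y+2)`,
bounding `Tⁿ⁺¹ g` at `y` by `Tⁿ g` at `y + 1` gives `0 ≤ Tⁿ g (y/(y+1)) ≤ M ((y+1)/(y+n+1))²`
for `g = g₀, h₀`, and `Tⁿ f₀ = Tⁿ g₀ - Tⁿ h₀` by linearity.
-/

open Set

theorem MonotoneOn.csSup_image_Icc {α β : Type*} [Preorder α] [ConditionallyCompleteLattice β]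
    {f : α → β} {a b : α} (hab : a ≤ b) (hf : MonotoneOn f (Icc a b)) :
    sSup (f '' Icc a b) = f b :=
  IsGreatest.csSup_eq
    ⟨mem_image_of_mem f (right_mem_Icc.2 hab),
      forall_mem_image.2 fun _ hx ↦ hf hx (right_mem_Icc.2 hab) hx.2⟩

section

local notation "I" => Icc (1 / 2 : ℝ) 1

lemma one_div_two_sub_mem {x : ℝ} (hx : x ∈ I) : 1 / (2 - x) ∈ I := by
  obtain ⟨h1, h2⟩ := hx
  constructor
  · rw [le_div_iff₀ (by linarith)]; linarith
  · rw [div_le_one (by linarith)]; linarith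

lemma one_div_one_add_mem {x : ℝ} (hx : x ∈ I) : 1 / (1 + x) ∈ I := by
  obtain ⟨h1, h2⟩ := hx
  constructor
  · rw [le_div_iff₀ (by linarith)]; linarith
  · rw [div_le_one (by linarith)]; linarith

lemma div_add_one_mem {y : ℝ} (hy : 1 ≤ y) : y / (y + 1) ∈ I := by
  constructor
  · rw [le_div_iff₀ (by linarith)]; linarith
  · rw [div_le_one (by linarith)]; linarith

lemma monotoneOn_one_div_two_sub : MonotoneOn (fun x : ℝ ↦ 1 / (2 - x)) I :=
  fun _ _ _ hx' h ↦ one_div_le_one_div_of_le (by linarith [hx'.2]) (by linarith)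

lemma antitoneOn_one_div_one_add : AntitoneOn (fun x : ℝ ↦ 1 / (1 + x)) I :=
  fun _ hx _ _ h ↦ one_div_le_one_div_of_le (by linarith [hx.1]) (by linarith)

lemma one_div_one_add_le_one_div_two_sub {x : ℝ} (hx : x ∈ I) : 1 / (1 + x) ≤ 1 / (2 - x) :=
  one_div_le_one_div_of_le (by linarith [hx.2]) (by linarith [hx.1])

lemma T_apply (f : ℝ → ℝ) (x : ℝ) :
    T f x = f (1 / (2 - x)) * (1 / (2 - x)) ^ 2 - f (1 / (1 + x)) * (1 / (1 + x)) ^ 2 := by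
  simp only [T, one_div_pow, mul_one_div]

lemma iterate_T_eqOn_sub {f g h : ℝ → ℝ} (hf : EqOn f (g - h) I) (n : ℕ) :
    EqOn (T^[n] f) (T^[n] g - T^[n] h) I := by
  induction n with
  | zero => exact hf
  | succ n ih =>
    intro x hx
    simp only [Function.iterate_succ_apply', Pi.sub_apply, T,
      ih (one_div_two_sub_mem hx), ih (one_div_one_add_mem hx)]
    ring

variable {g : ℝ → ℝ}

lemma MonotoneOn.mul_sq (hm : MonotoneOn g I) (h0 : ∀ x ∈ I, 0 ≤ g x) :
    MonotoneOn (fun t ↦ g t * t ^ 2) I :=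
  hm.mul (fun _ ha _ _ h ↦ pow_le_pow_left₀ (by linarith [ha.1]) h 2) h0
    fun _ _ ↦ sq_nonneg _

lemma T_monotoneOn (hm : MonotoneOn g I) (h0 : ∀ x ∈ I, 0 ≤ g x) : MonotoneOn (T g) I := by
  have hu := hm.mul_sq h0
  intro x hx x' hx' h
  rw [T_apply, T_apply]
  have h₁ := hu (one_div_two_sub_mem hx) (one_div_two_sub_mem hx')
    (monotoneOn_one_div_two_sub hx hx' h)
  have h₂ := hu (one_div_one_add_mem hx') (one_div_one_add_mem hx)
    (antitoneOn_one_div_one_add hx hx' h)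
  linarith

lemma T_nonneg (hm : MonotoneOn g I) (h0 : ∀ x ∈ I, 0 ≤ g x) {x : ℝ} (hx : x ∈ I) :
    0 ≤ T g x := by
  rw [T_apply, sub_nonneg]
  exact hm.mul_sq h0 (one_div_one_add_mem hx) (one_div_two_sub_mem hx)
    (one_div_one_add_le_one_div_two_sub hx)

lemma iterate_T_monotoneOn_nonneg (hm : MonotoneOn g I) (h0 : ∀ x ∈ I, 0 ≤ g x) (n : ℕ) :
    MonotoneOn (T^[n] g) I ∧ ∀ x ∈ I, 0 ≤ T^[n] g x := by
  induction n with
  | zero => exact ⟨hm, h0⟩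
  | succ n ih =>
    rw [Function.iterate_succ']
    exact ⟨T_monotoneOn ih.1 ih.2, fun _ ↦ T_nonneg ih.1 ih.2⟩

lemma T_le (h0 : ∀ x ∈ I, 0 ≤ g x) {x : ℝ} (hx : x ∈ I) :
    T g x ≤ g (1 / (2 - x)) * (1 / (2 - x)) ^ 2 := by
  rw [T_apply, sub_le_self_iff]
  exact mul_nonneg (h0 _ (one_div_one_add_mem hx)) (sq_nonneg _)

lemma iterate_T_le (hm : MonotoneOn g I) (h0 : ∀ x ∈ I, 0 ≤ g x) {M : ℝ}
    (hM : ∀ x ∈ I, g x ≤ M) (n : ℕ) {y : ℝ} (hy : 1 ≤ y) :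
    T^[n] g (y / (y + 1)) ≤ M * ((y + 1) / (y + n + 1)) ^ 2 := by
  induction n generalizing y with
  | zero => simpa [div_self (by linarith : y + 1 ≠ 0)] using hM _ (div_add_one_mem hy)
  | succ n ih =>
    have hφ : 1 / (2 - y / (y + 1)) = (y + 1) / (y + 1 + 1) := by
      have : 2 - y / (y + 1) = (y + 1 + 1) / (y + 1) := by
        field_simp [show y + 1 ≠ 0 by linarith]; ring
      rw [this, one_div_div]
    calc T^[n + 1] g (y / (y + 1))
        ≤ T^[n] g ((y + 1) / (y + 1 + 1)) * ((y + 1) / (y + 1 + 1)) ^ 2 := by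
          rw [Function.iterate_succ_apply', ← hφ]
          exact T_le (iterate_T_monotoneOn_nonneg hm h0 n).2 (div_add_one_mem hy)
      _ ≤ M * ((y + 1 + 1) / (y + 1 + n + 1)) ^ 2 * ((y + 1) / (y + 1 + 1)) ^ 2 :=
          mul_le_mul_of_nonneg_right (ih (by linarith)) (sq_nonneg _)
      _ = M * ((y + 1) / (y + ↑(n + 1) + 1)) ^ 2 := by
          have : y + 1 + 1 ≠ 0 := by linarith
          push_cast
          field_simp
          ring

end

theorem T_iterate_bound_general (f₀ g₀ h₀ : ℝ → ℝ)
    (hgm : MonotoneOn g₀ (Set.Icc (1 / 2 : ℝ) 1))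
    (hhm : MonotoneOn h₀ (Set.Icc (1 / 2 : ℝ) 1))
    (hg0 : ∀ x ∈ Set.Icc (1 / 2 : ℝ) 1, 0 ≤ g₀ x)
    (hh0 : ∀ x ∈ Set.Icc (1 / 2 : ℝ) 1, 0 ≤ h₀ x)
    (hf : ∀ x ∈ Set.Icc (1 / 2 : ℝ) 1, f₀ x = g₀ x - h₀ x)
    (M : ℝ)
    (hM : M = max (sSup (g₀ '' Set.Icc (1 / 2 : ℝ) 1)) (sSup (h₀ '' Set.Icc (1 / 2 : ℝ) 1)))
    (n : ℕ) (y : ℝ) (hy : 1 ≤ y) :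
    |(T^[n] f₀) (y / (y + 1))| ≤ 2 * M * ((y + 1) / (y + n + 1)) ^ 2 := by
  have h12 : (1 / 2 : ℝ) ≤ 1 := by norm_num
  rw [hgm.csSup_image_Icc h12, hhm.csSup_image_Icc h12] at hM
  have hgM : ∀ x ∈ Set.Icc (1 / 2 : ℝ) 1, g₀ x ≤ M := fun x hx ↦
    hM ▸ le_max_of_le_left (hgm hx ⟨h12, le_rfl⟩ hx.2)
  have hhM : ∀ x ∈ Set.Icc (1 / 2 : ℝ) 1, h₀ x ≤ M := fun x hx ↦
    hM ▸ le_max_of_le_right (hhm hx ⟨h12, le_rfl⟩ hx.2)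
  have hx := div_add_one_mem hy
  have hG := iterate_T_le hgm hg0 hgM n hy
  have hH := iterate_T_le hhm hh0 hhM n hy
  have hG0 := (iterate_T_monotoneOn_nonneg hgm hg0 n).2 _ hx
  have hH0 := (iterate_T_monotoneOn_nonneg hhm hh0 n).2 _ hx
  rw [iterate_T_eqOn_sub hf n hx, Pi.sub_apply, abs_le]
  constructor <;> linarith

/-- If `f₀ = g₀ − h₀` with `g₀, h₀` nonnegative bounded increasing continuous
functions on `[1/2,1]` and `M = max(sup g₀, sup h₀)`, then for all `n ≥ 0` and
`y ≥ 1`: `|f_n(y/(y+1))| ≤ 2M((y+1)/(y+n+1))²`, where `f_n = T^n f₀`. -/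
theorem T_iterate_bound (f₀ g₀ h₀ : ℝ → ℝ)
    (hg : ContinuousOn g₀ (Set.Icc (1 / 2 : ℝ) 1))
    (hh : ContinuousOn h₀ (Set.Icc (1 / 2 : ℝ) 1))
    (hgm : MonotoneOn g₀ (Set.Icc (1 / 2 : ℝ) 1))
    (hhm : MonotoneOn h₀ (Set.Icc (1 / 2 : ℝ) 1))
    (hg0 : ∀ x ∈ Set.Icc (1 / 2 : ℝ) 1, 0 ≤ g₀ x)
    (hh0 : ∀ x ∈ Set.Icc (1 / 2 : ℝ) 1, 0 ≤ h₀ x)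
    (hf : ∀ x ∈ Set.Icc (1 / 2 : ℝ) 1, f₀ x = g₀ x - h₀ x)
    (M : ℝ)
    (hM : M = max (sSup (g₀ '' Set.Icc (1 / 2 : ℝ) 1)) (sSup (h₀ '' Set.Icc (1 / 2 : ℝ) 1)))
    (n : ℕ) (y : ℝ) (hy : 1 ≤ y) :
    |(T^[n] f₀) (y / (y + 1))| ≤ 2 * M * ((y + 1) / (y + n + 1)) ^ 2 :=
  T_iterate_bound_general f₀ g₀ h₀ hgm hhm hg0 hh0 hf M hM n y hy
end
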